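/- Assume μ(x) ≥ μ_min > 0 for all x∈V and a:V→ℝ satisfies (A₁) and (A₂′). Then for every φ ∈ ℋ with φ ≢ 0, J(tφ) → −∞ as t → +∞. -/

import Mathlib

open Filter Real Topology
set_option maxHeartbeats 1000000

noncomputable section

/-- Sum of `f` over the neighbours of `x`. -/
def nbrSum {V : Type*} (Adj : V → V → Prop) (f : V → ℝ) (x : V) : ℝ :=
  ∑' y : {y : V // Adj x y}, f y.1

/-- The squared length of the gradient `|∇u|²(x)`. -/
def gradSq {V : Type*} (μ : V → ℝ) (ω : V → V → ℝ) (Adj : V → V → Prop)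
    (u : V → ℝ) (x : V) : ℝ :=
  (1 / (2 * μ x)) * nbrSum Adj (fun y => ω x y * (u y - u x) ^ 2) x

/-- The gradient form `Γ(u,v)(x)`. -/
def gammaG {V : Type*} (μ : V → ℝ) (ω : V → V → ℝ) (Adj : V → V → Prop)
    (u v : V → ℝ) (x : V) : ℝ :=
  (1 / (2 * μ x)) * nbrSum Adj (fun y => ω x y * (u y - u x) * (v y - v x)) x

/-- The graph Laplacian `Δu(x)`. -/
def lapG {V : Type*} (μ : V → ℝ) (ω : V → V → ℝ) (Adj : V → V → Prop)
    (u : V → ℝ) (x : V) : ℝ :=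
  (1 / μ x) * nbrSum Adj (fun y => ω x y * (u y - u x)) x

/-- `G = (V,E)` is a connected locally finite graph with symmetric positive
edge weights `ω` (the adjacency relation `Adj` records `y ∼ x`). -/
def GoodGraph {V : Type*} (Adj : V → V → Prop) (ω : V → V → ℝ) : Prop :=
  (∀ x y, Adj x y → Adj y x) ∧
  (∀ x y, Adj x y → ω x y = ω y x) ∧
  (∀ x y, Adj x y → 0 < ω x y) ∧
  (∀ x, {y | Adj x y}.Finite) ∧
  (∀ x y, Relation.ReflTransGen Adj x y)

/-- `u ∈ ℋ` : both `∫_V (|∇u|² + u²) dμ < ∞` and `∫_V a u² dμ < ∞`. -/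
def memH {V : Type*} (μ : V → ℝ) (ω : V → V → ℝ) (Adj : V → V → Prop)
    (a : V → ℝ) (u : V → ℝ) : Prop :=
  Summable (fun x => μ x * (gradSq μ ω Adj u x + u x ^ 2)) ∧
  Summable (fun x => μ x * (a x * u x ^ 2))

/-- `‖u‖_ℋ = (∫_V (|∇u|² + (a+1)u²) dμ)^{1/2}`. -/
def normH {V : Type*} (μ : V → ℝ) (ω : V → V → ℝ) (Adj : V → V → Prop)
    (a : V → ℝ) (u : V → ℝ) : ℝ :=
  Real.sqrt (∑' x, μ x * (gradSq μ ω Adj u x + (a x + 1) * u x ^ 2))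

/-- `u ∈ 𝒟 = {u ∈ ℋ : ∫_V u²|log u²| dμ < ∞}`. -/
def memD {V : Type*} (μ : V → ℝ) (ω : V → V → ℝ) (Adj : V → V → Prop)
    (a : V → ℝ) (u : V → ℝ) : Prop :=
  memH μ ω Adj a u ∧ Summable (fun x => μ x * (u x ^ 2 * |Real.log (u x ^ 2)|))

/-- The energy functional `J(u) = ½‖u‖_ℋ² − ½∫_V u² log u² dμ`. -/
def JFun {V : Type*} (μ : V → ℝ) (ω : V → V → ℝ) (Adj : V → V → Prop)
    (a : V → ℝ) (u : V → ℝ) : ℝ :=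
  (1 / 2) * (∑' x, μ x * (gradSq μ ω Adj u x + (a x + 1) * u x ^ 2)) -
    (1 / 2) * ∑' x, μ x * (u x ^ 2 * Real.log (u x ^ 2))

/-- The directional derivative
`J'(u)·v = ∫_V (Γ(u,v) + a u v) dμ − ∫_V u v log u² dμ`. -/
def JDer {V : Type*} (μ : V → ℝ) (ω : V → V → ℝ) (Adj : V → V → Prop)
    (a : V → ℝ) (u v : V → ℝ) : ℝ :=
  (∑' x, μ x * (gammaG μ ω Adj u v x + a x * u x * v x)) -
    ∑' x, μ x * (u x * v x * Real.log (u x ^ 2))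

/-- The Nehari manifold `𝒩 = {u ∈ 𝒟 \ {0} : J'(u)·u = 0}`. -/
def Nehari {V : Type*} (μ : V → ℝ) (ω : V → V → ℝ) (Adj : V → V → Prop)
    (a : V → ℝ) (u : V → ℝ) : Prop :=
  memD μ ω Adj a u ∧ u ≠ 0 ∧ JDer μ ω Adj a u u = 0

/-- `d = inf_{u ∈ 𝒩} J(u)`. -/
def groundLevel {V : Type*} (μ : V → ℝ) (ω : V → V → ℝ) (Adj : V → V → Prop)
    (a : V → ℝ) : ℝ :=
  sInf {c : ℝ | ∃ u : V → ℝ, Nehari μ ω Adj a u ∧ JFun μ ω Adj a u = c}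

private lemma R1 {s B : ℝ} (hs : 0 ≤ s) (hsB : s ≤ B) (hB : 1 ≤ B) :
    s * |Real.log s| ≤ 1 + B * |Real.log B| := by
  have hBabs : 0 ≤ B * |Real.log B| := by positivity
  rcases eq_or_lt_of_le hs with h | h
  · simp [← h]; positivity
  rcases le_or_gt s 1 with h1 | h1
  · have h2 : |Real.log s * s| < 1 := Real.abs_log_mul_self_lt s h h1
    rw [abs_mul, abs_of_nonneg hs] at h2
    nlinarith
  · have hlog : |Real.log s| = Real.log s := abs_of_nonneg (Real.log_nonneg h1.le)
    have hlogB : |Real.log B| = Real.log B := abs_of_nonneg (Real.log_nonneg hB)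
    have h3 : Real.log s ≤ Real.log B := Real.log_le_log h hsB
    rw [hlog]
    rw [hlogB] at hBabs ⊢
    nlinarith [Real.log_nonneg h1.le]

private lemma R2 {s : ℝ} (h0 : 0 < s) (h1 : s ≤ 1) :
    s * |Real.log s| ≤ 2 * Real.sqrt s := by
  set u := Real.sqrt s with hu
  have hu0 : 0 < u := Real.sqrt_pos.mpr h0
  have huu : u * u = s := Real.mul_self_sqrt h0.le
  have habs : |Real.log s| = -Real.log s := abs_of_nonpos (Real.log_nonpos h0.le h1)
  have hlogs : Real.log u = Real.log s / 2 := Real.log_sqrt h0.le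
  have hinv : Real.log u⁻¹ ≤ u⁻¹ - 1 := Real.log_le_sub_one_of_pos (by positivity)
  have hloginv : Real.log u⁻¹ = -Real.log u := Real.log_inv u
  have hsu : s * u⁻¹ = u := by
    rw [← huu, mul_assoc, mul_inv_cancel₀ hu0.ne', mul_one]
  have hmul : s * Real.log u⁻¹ ≤ s * (u⁻¹ - 1) :=
    mul_le_mul_of_nonneg_left hinv h0.le
  rw [habs]
  nlinarith [h0.le]

private lemma gradSq_nonneg' {V : Type*} {μ : V → ℝ} {ω : V → V → ℝ} {Adj : V → V → Prop}
    {u : V → ℝ} {x : V} (hμ : 0 < μ x) (hω : ∀ y, Adj x y → 0 ≤ ω x y) :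
    0 ≤ gradSq μ ω Adj u x := by
  refine mul_nonneg (by positivity) (tsum_nonneg ?_)
  rintro ⟨y, hy⟩
  exact mul_nonneg (hω y hy) (sq_nonneg _)

private lemma key_summable {V : Type*} (Adj : V → V → Prop) (ω : V → V → ℝ)
    (μ a : V → ℝ) (μmin : ℝ) (hμmin : 0 < μmin) (hμ : ∀ x, μmin ≤ μ x)
    (hω : ∀ x y, Adj x y → 0 < ω x y)
    (hA1 : ∃ a₀ : ℝ, -1 < a₀ ∧ a₀ < 0 ∧ ∀ x, a₀ ≤ a x)
    (hA2' : ∃ M₀ : ℝ, 0 < M₀ ∧ Summable (fun x : {x : V // a x ≤ M₀} => μ x.1) ∧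
      Summable (fun x : {x : V // M₀ < a x} => μ x.1 / a x.1))
    (φ : V → ℝ) (hφ : memH μ ω Adj a φ) :
    Summable (fun x => μ x * (φ x ^ 2 * |Real.log (φ x ^ 2)|)) := by
  obtain ⟨a₀, ha₀1, ha₀0, ha₀⟩ := hA1
  obtain ⟨M₀, hM₀, hS₀, hSc⟩ := hA2'
  have hμ0 : ∀ x, 0 < μ x := fun x => lt_of_lt_of_le hμmin (hμ x)
  have hg : ∀ x, 0 ≤ gradSq μ ω Adj φ x :=
    fun x => gradSq_nonneg' (hμ0 x) (fun y hy => (hω x y hy).le)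
  have hφ2 : Summable (fun x => μ x * φ x ^ 2) := by
    refine hφ.1.of_nonneg_of_le
      (fun x => mul_nonneg (hμ0 x).le (sq_nonneg _)) (fun x => ?_)
    nlinarith [mul_nonneg (hμ0 x).le (hg x)]
  have habs : Summable (fun x => μ x * (|a x| * φ x ^ 2)) := by
    have h2 : Summable (fun x => μ x * (a x * φ x ^ 2) + (-2 * a₀) * (μ x * φ x ^ 2)) :=
      hφ.2.add (hφ2.mul_left _)
    refine h2.of_nonneg_of_le
      (fun x => mul_nonneg (hμ0 x).le (mul_nonneg (abs_nonneg _) (sq_nonneg _)))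
      (fun x => ?_)
    have h3 : |a x| ≤ a x - 2 * a₀ := by
      rcases abs_cases (a x) with ⟨h, h'⟩ | ⟨h, h'⟩ <;> nlinarith [ha₀ x]
    nlinarith [mul_le_mul_of_nonneg_left
      (mul_le_mul_of_nonneg_right h3 (sq_nonneg (φ x))) (hμ0 x).le]
  set Sq := ∑' x, μ x * φ x ^ 2 with hSqdef
  have hSqnn : 0 ≤ Sq :=
    tsum_nonneg (fun x => mul_nonneg (hμ0 x).le (sq_nonneg _))
  have hbound0 : ∀ x, φ x ^ 2 ≤ Sq / μmin := by
    intro x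
    have h1 : μ x * φ x ^ 2 ≤ Sq :=
      hφ2.le_tsum x (fun j _ => mul_nonneg (hμ0 j).le (sq_nonneg _))
    have h2 : μmin * φ x ^ 2 ≤ μ x * φ x ^ 2 :=
      mul_le_mul_of_nonneg_right (hμ x) (sq_nonneg _)
    rw [le_div_iff₀ hμmin]; linarith
  clear_value Sq
  set B : ℝ := Sq / μmin + 1 with hBdef
  have hB1 : 1 ≤ B := by
    have : 0 ≤ Sq / μmin := div_nonneg hSqnn hμmin.le
    rw [hBdef]; linarith
  have hbound : ∀ x, φ x ^ 2 ≤ B := fun x => by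
    have := hbound0 x; rw [hBdef]; linarith
  clear_value B
  have hind₀ : Summable (fun x => if a x ≤ M₀ then μ x else 0) := by
    have h1 : Summable ({x : V | a x ≤ M₀}.indicator μ) :=
      summable_subtype_iff_indicator.mp hS₀
    exact h1.congr (fun x => by simp [Set.indicator_apply, Set.mem_setOf_eq])
  have hindc : Summable (fun x => if M₀ < a x then μ x / a x else 0) := by
    have h1 : Summable ({x : V | M₀ < a x}.indicator (fun x => μ x / a x)) :=
      summable_subtype_iff_indicator.mp hSc
    exact h1.congr (fun x => by simp [Set.indicator_apply, Set.mem_setOf_eq])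
  obtain ⟨M₁, hM₀M₁, h1M₁⟩ : ∃ M₁ : ℝ, M₀ ≤ M₁ ∧ 1 ≤ M₁ :=
    ⟨max M₀ 1, le_max_left _ _, le_max_right _ _⟩
  have hM₁0 : 0 < M₁ := lt_of_lt_of_le hM₀ hM₀M₁
  have hterm1 : Summable (fun x => if a x ≤ M₁ then μ x else 0) := by
    have h2 : Summable (fun x => (if a x ≤ M₀ then μ x else 0)
        + M₁ * (if M₀ < a x then μ x / a x else 0)) :=
      hind₀.add (hindc.mul_left _)
    refine h2.of_nonneg_of_le (fun x => ?_) (fun x => ?_)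
    · by_cases h : a x ≤ M₁ <;> simp [h, (hμ0 x).le]
    · by_cases h1 : a x ≤ M₀
      · rw [if_pos (h1.trans hM₀M₁), if_pos h1, if_neg (not_lt.mpr h1)]
        simp
      · push_neg at h1
        rw [if_neg (not_le.mpr h1), if_pos h1]
        have ha0 : 0 < a x := lt_trans hM₀ h1
        have hdiv : 0 ≤ μ x / a x := div_nonneg (hμ0 x).le ha0.le
        by_cases h2 : a x ≤ M₁
        · rw [if_pos h2]
          have heq : a x * (μ x / a x) = μ x := by
            rw [mul_comm, div_mul_cancel₀ _ ha0.ne']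
          have := mul_le_mul_of_nonneg_right h2 hdiv
          linarith
        · rw [if_neg h2]
          have hμnn := (hμ0 x).le
          positivity
  have hterm3 : Summable (fun x => if M₁ < a x then μ x / a x else 0) := by
    refine hindc.of_nonneg_of_le (fun x => ?_) (fun x => ?_)
    · by_cases h : M₁ < a x
      · rw [if_pos h]
        exact div_nonneg (hμ0 x).le (lt_trans hM₁0 h).le
      · rw [if_neg h]
    · by_cases h : M₁ < a x
      · rw [if_pos h, if_pos (lt_of_le_of_lt hM₀M₁ h)]
      · rw [if_neg h]
        by_cases h2 : M₀ < a x
        · rw [if_pos h2]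
          exact div_nonneg (hμ0 x).le (lt_trans hM₀ h2).le
        · rw [if_neg h2]
  set K : ℝ := 1 + B * |Real.log B| with hKdef
  have hK0 : 0 ≤ K := by rw [hKdef]; positivity
  have hR1 : ∀ x, φ x ^ 2 * |Real.log (φ x ^ 2)| ≤ K :=
    fun x => hKdef ▸ R1 (sq_nonneg _) (hbound x) hB1
  clear_value K
  set C2 : ℝ := 2 + |Real.log B| with hC2def
  have hC20 : 0 ≤ C2 := by rw [hC2def]; positivity
  clear_value C2
  have hG : Summable (fun x => K * (if a x ≤ M₁ then μ x else 0)
      + C2 * (μ x * (|a x| * φ x ^ 2)) + 2 * (if M₁ < a x then μ x / a x else 0)) :=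
    ((hterm1.mul_left K).add (habs.mul_left C2)).add (hterm3.mul_left 2)
  refine hG.of_nonneg_of_le
    (fun x => mul_nonneg (hμ0 x).le (mul_nonneg (sq_nonneg _) (abs_nonneg _)))
    (fun x => ?_)
  have hterm1nn : (0:ℝ) ≤ if a x ≤ M₁ then μ x else 0 := by
    by_cases h : a x ≤ M₁ <;> simp [h, (hμ0 x).le]
  have hterm3nn : (0:ℝ) ≤ if M₁ < a x then μ x / a x else 0 := by
    by_cases h : M₁ < a x
    · rw [if_pos h]
      exact div_nonneg (hμ0 x).le (lt_trans hM₁0 h).le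
    · rw [if_neg h]
  have habsnn : (0:ℝ) ≤ μ x * (|a x| * φ x ^ 2) :=
    mul_nonneg (hμ0 x).le (mul_nonneg (abs_nonneg _) (sq_nonneg _))
  have hterm3nn2 : (0:ℝ) ≤ 2 * (if M₁ < a x then μ x / a x else 0) := by linarith
  have habsnn2 : (0:ℝ) ≤ C2 * (μ x * (|a x| * φ x ^ 2)) := mul_nonneg hC20 habsnn
  by_cases h1 : a x ≤ M₁
  · rw [if_pos h1]
    have h5 : μ x * (φ x ^ 2 * |Real.log (φ x ^ 2)|) ≤ μ x * K :=
      mul_le_mul_of_nonneg_left (hR1 x) (hμ0 x).le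
    have hcomm : μ x * K = K * μ x := mul_comm _ _
    linarith
  · push_neg at h1
    rw [if_neg (not_le.mpr h1), if_pos h1]
    have hA1' : 1 < a x := lt_of_le_of_lt h1M₁ h1
    have hA0 : 0 < a x := lt_trans zero_lt_one hA1'
    have hdiv : 0 ≤ μ x / a x := div_nonneg (hμ0 x).le hA0.le
    have hbx : φ x ^ 2 ≤ B := hbound x
    have hax : |a x| = a x := abs_of_pos hA0
    rcases eq_or_lt_of_le (sq_nonneg (φ x)) with hz | hz
    · rw [← hz]
      simp only [mul_zero, zero_mul, abs_zero, add_zero, zero_add, Real.log_zero]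
      linarith
    by_cases h2 : φ x ^ 2 * a x ^ 2 ≤ 1
    · have hs1 : φ x ^ 2 ≤ 1 := by nlinarith [sq_nonneg (a x)]
      have hrt : Real.sqrt (φ x ^ 2) ≤ 1 / a x := by
        rw [show (1:ℝ) / a x = Real.sqrt ((1 / a x) ^ 2) by
          rw [Real.sqrt_sq (by positivity)]]
        apply Real.sqrt_le_sqrt
        rw [div_pow, one_pow, le_div_iff₀ (pow_pos hA0 2)]
        linarith
      have hb : φ x ^ 2 * |Real.log (φ x ^ 2)| ≤ 2 * (1 / a x) :=
        le_trans (R2 hz hs1) (by linarith)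
      have h3 : μ x * (φ x ^ 2 * |Real.log (φ x ^ 2)|) ≤ μ x * (2 * (1 / a x)) :=
        mul_le_mul_of_nonneg_left hb (hμ0 x).le
      have h4 : μ x * (2 * (1 / a x)) = 2 * (μ x / a x) := by ring
      linarith [mul_nonneg hK0 hterm1nn]
    · push_neg at h2
      have hlogb : |Real.log (φ x ^ 2)| ≤ 2 * a x + |Real.log B| := by
        rcases le_or_gt (φ x ^ 2) 1 with hs1 | hs1
        · have h5 : Real.log (φ x ^ 2 * a x ^ 2)
              = Real.log (φ x ^ 2) + 2 * Real.log (a x) := by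
            rw [Real.log_mul hz.ne' (pow_ne_zero 2 hA0.ne'), Real.log_pow]
            norm_num
          have h6 : 0 ≤ Real.log (φ x ^ 2 * a x ^ 2) := Real.log_nonneg h2.le
          have h7 : Real.log (a x) ≤ a x := by
            linarith [Real.log_le_sub_one_of_pos hA0]
          rw [abs_of_nonpos (Real.log_nonpos (sq_nonneg _) hs1)]
          nlinarith [abs_nonneg (Real.log B)]
        · rw [abs_of_nonneg (Real.log_nonneg hs1.le)]
          have h8 : Real.log (φ x ^ 2) ≤ Real.log B := Real.log_le_log hz hbx
          have h9 : Real.log B ≤ |Real.log B| := le_abs_self _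
          linarith
      have hb : φ x ^ 2 * |Real.log (φ x ^ 2)| ≤ C2 * (a x * φ x ^ 2) := by
        have h10 : φ x ^ 2 * |Real.log (φ x ^ 2)|
            ≤ φ x ^ 2 * (2 * a x + |Real.log B|) :=
          mul_le_mul_of_nonneg_left hlogb (sq_nonneg _)
        have h11 : φ x ^ 2 ≤ a x * φ x ^ 2 := by nlinarith
        rw [hC2def]
        nlinarith [abs_nonneg (Real.log B)]
      have h12 : μ x * (φ x ^ 2 * |Real.log (φ x ^ 2)|) ≤ μ x * (C2 * (a x * φ x ^ 2)) :=
        mul_le_mul_of_nonneg_left hb (hμ0 x).le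
      have h14 : μ x * (C2 * (a x * φ x ^ 2)) = C2 * (μ x * (|a x| * φ x ^ 2)) := by
        rw [hax]; ring
      linarith [mul_nonneg hK0 hterm1nn]


private lemma gradSq_smul {V : Type*} (μ : V → ℝ) (ω : V → V → ℝ) (Adj : V → V → Prop)
    (t : ℝ) (u : V → ℝ) (x : V) :
    gradSq μ ω Adj (fun y => t * u y) x = t ^ 2 * gradSq μ ω Adj u x := by
  simp only [gradSq, nbrSum]
  rw [show (fun y : {y : V // Adj x y} => ω x y.1 * (t * u y.1 - t * u x) ^ 2)
      = (fun y : {y : V // Adj x y} => t ^ 2 * (ω x y.1 * (u y.1 - u x) ^ 2)) from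
    funext fun y => by ring, tsum_mul_left]
  ring

/-- mountain pass geometry, part (ii): for every `φ ∈ ℋ \ {0}`,
`J(tφ) → −∞` as `t → +∞`. -/
theorem mountain_pass_geometry_ii
    {V : Type*} [Countable V] (Adj : V → V → Prop) (ω : V → V → ℝ) (μ a : V → ℝ)
    (μmin : ℝ) (hμmin : 0 < μmin) (hμ : ∀ x, μmin ≤ μ x)
    (hG : GoodGraph Adj ω)
    (hA1 : ∃ a₀ : ℝ, -1 < a₀ ∧ a₀ < 0 ∧ ∀ x, a₀ ≤ a x)
    (hA2' : ∃ M₀ : ℝ, 0 < M₀ ∧ Summable (fun x : {x : V // a x ≤ M₀} => μ x.1) ∧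
      Summable (fun x : {x : V // M₀ < a x} => μ x.1 / a x.1)) :
    ∀ φ : V → ℝ, memH μ ω Adj a φ → φ ≠ 0 →
      Tendsto (fun t : ℝ => JFun μ ω Adj a (fun x => t * φ x)) atTop atBot := by
  intro φ hφ hφ0
  have hμ0 : ∀ x, 0 < μ x := fun x => lt_of_lt_of_le hμmin (hμ x)
  have hω := hG.2.2.1
  have hg : ∀ x, 0 ≤ gradSq μ ω Adj φ x :=
    fun x => gradSq_nonneg' (hμ0 x) (fun y hy => (hω x y hy).le)
  have hφ2 : Summable (fun x => μ x * φ x ^ 2) := by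
    refine hφ.1.of_nonneg_of_le
      (fun x => mul_nonneg (hμ0 x).le (sq_nonneg _)) (fun x => ?_)
    nlinarith [mul_nonneg (hμ0 x).le (hg x)]
  have hFabs : Summable (fun x => μ x * (φ x ^ 2 * |Real.log (φ x ^ 2)|)) :=
    key_summable Adj ω μ a μmin hμmin hμ hω hA1 hA2' φ hφ
  have hLsum : Summable (fun x => μ x * (φ x ^ 2 * Real.log (φ x ^ 2))) := by
    have habs : ∀ x, |μ x * (φ x ^ 2 * Real.log (φ x ^ 2))|
        = μ x * (φ x ^ 2 * |Real.log (φ x ^ 2)|) := by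
      intro x
      rw [abs_mul, abs_mul, abs_of_nonneg (hμ0 x).le, abs_of_nonneg (sq_nonneg (φ x))]
    exact Summable.of_abs (hFabs.congr (fun x => (habs x).symm))
  obtain ⟨x₀, hx₀⟩ := Function.ne_iff.mp hφ0
  have hx₀' : φ x₀ ≠ 0 := hx₀
  have hSqpos : 0 < ∑' x, μ x * φ x ^ 2 :=
    hφ2.tsum_pos (fun x => mul_nonneg (hμ0 x).le (sq_nonneg _)) x₀
      (mul_pos (hμ0 x₀) (pow_two_pos_of_ne_zero hx₀'))
  have key : ∀ t : ℝ, 0 < t →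
      JFun μ ω Adj a (fun x => t * φ x)
        = t ^ 2 * ((1/2) * (∑' x, μ x * (gradSq μ ω Adj φ x + (a x + 1) * φ x ^ 2))
            - (1/2) * (∑' x, μ x * (φ x ^ 2 * Real.log (φ x ^ 2)))
            - Real.log t * (∑' x, μ x * φ x ^ 2)) := by
    intro t ht
    have hS1 : (∑' x, μ x * (gradSq μ ω Adj (fun y => t * φ y) x
          + (a x + 1) * (t * φ x) ^ 2))
        = t ^ 2 * (∑' x, μ x * (gradSq μ ω Adj φ x + (a x + 1) * φ x ^ 2)) := by
      rw [← tsum_mul_left]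
      apply tsum_congr
      intro x
      rw [gradSq_smul]
      ring
    have hS2 : (∑' x, μ x * ((t * φ x) ^ 2 * Real.log ((t * φ x) ^ 2)))
        = (t ^ 2 * (2 * Real.log t)) * (∑' x, μ x * φ x ^ 2)
          + t ^ 2 * (∑' x, μ x * (φ x ^ 2 * Real.log (φ x ^ 2))) := by
      have hpt : ∀ x, μ x * ((t * φ x) ^ 2 * Real.log ((t * φ x) ^ 2))
          = (t ^ 2 * (2 * Real.log t)) * (μ x * φ x ^ 2)
            + t ^ 2 * (μ x * (φ x ^ 2 * Real.log (φ x ^ 2))) := by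
        intro x
        rcases eq_or_ne (φ x) 0 with h | h
        · simp [h]
        · have hl : Real.log ((t * φ x) ^ 2)
              = 2 * Real.log t + Real.log (φ x ^ 2) := by
            rw [mul_pow, Real.log_mul (pow_ne_zero 2 ht.ne') (pow_ne_zero 2 h),
              Real.log_pow]
            norm_num
          rw [hl]; ring
      rw [tsum_congr hpt, Summable.tsum_add (hφ2.mul_left _) (hLsum.mul_left _),
        tsum_mul_left, tsum_mul_left]
    simp only [JFun]
    rw [hS1, hS2]
    ring
  have h1 : Tendsto (fun t : ℝ => Real.log t * (∑' x, μ x * φ x ^ 2)) atTop atTop :=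
    Real.tendsto_log_atTop.atTop_mul_const hSqpos
  have h2 : Tendsto (fun t : ℝ =>
      -(Real.log t * (∑' x, μ x * φ x ^ 2))
        + ((1/2) * (∑' x, μ x * (gradSq μ ω Adj φ x + (a x + 1) * φ x ^ 2))
          - (1/2) * (∑' x, μ x * (φ x ^ 2 * Real.log (φ x ^ 2))))) atTop atBot :=
    tendsto_atBot_add_const_right _ _ (tendsto_neg_atBot_iff.mpr h1)
  have h3 : Tendsto (fun t : ℝ =>
      (1/2) * (∑' x, μ x * (gradSq μ ω Adj φ x + (a x + 1) * φ x ^ 2))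
        - (1/2) * (∑' x, μ x * (φ x ^ 2 * Real.log (φ x ^ 2)))
        - Real.log t * (∑' x, μ x * φ x ^ 2)) atTop atBot :=
    h2.congr (fun t => by ring)
  have hfin : Tendsto (fun t : ℝ => t ^ 2 *
      ((1/2) * (∑' x, μ x * (gradSq μ ω Adj φ x + (a x + 1) * φ x ^ 2))
        - (1/2) * (∑' x, μ x * (φ x ^ 2 * Real.log (φ x ^ 2)))
        - Real.log t * (∑' x, μ x * φ x ^ 2))) atTop atBot :=
    (tendsto_pow_atTop (by norm_num : (2:ℕ) ≠ 0)).atTop_mul_atBot₀ h3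
  refine Tendsto.congr' ?_ hfin
  filter_upwards [eventually_gt_atTop (0:ℝ)] with t ht
  exact (key t ht).symm
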